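/- Let $x_1 < \dots < x_n$ with $x_1 \geq 0$, probabilities $q_k \in (0,1)$ summing to 1, $\lambda > 0$, and let $x^*$ solve $x^* = \lambda \sum_k \frac{q_k x_k}{\lambda + x^* - x_k}$ with $x^* > x_n - \lambda$. Define $p_k = \frac{\lambda q_k}{\lambda + x^* - x_k}$. Then the distribution $p$ strictly first-order stochastically dominates $q$ whenever $n \geq 2$: for every $m \in \{1, \dots, n-1\}$, $\sum_{k > m} p_k > \sum_{k > m} q_k$. -/

import Mathlib

/-!
The fixed-point equation for `x*` says exactly that the weights `p` sum to one. Since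
`p k = q k * r k` with likelihood ratio `r k = λ / (λ + x* - x k)` strictly increasing in `k`,
`p - q` changes sign at most once, from negative to positive; with equal total mass this means
that `p` is `q` with some mass moved upwards.
-/

open Finset

theorem sum_filter_lt_sum_filter_of_single_crossing {ι M : Type*} [Fintype ι] [LinearOrder ι]
    [AddCommGroup M] [LinearOrder M] [IsOrderedAddMonoid M] {p q : ι → M}
    (hsum : ∑ i, p i = ∑ i, q i) (hcross : ∀ i j, i < j → q i ≤ p i → q j < p j)
    {P : ι → Prop} [DecidablePred P] (hP : Monotone P) (hlo : ∃ i, ¬P i) (hhi : ∃ i, P i) :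
    ∑ i with P i, q i < ∑ i with P i, p i := by
  -- Either `p < q` on all of the complement, or the crossing happens there and `q < p` on `P`.
  by_cases hbelow : ∀ i, ¬P i → p i < q i
  · obtain ⟨i₀, hi₀⟩ := hlo
    have hlow : ∑ i with ¬P i, p i < ∑ i with ¬P i, q i :=
      sum_lt_sum_of_nonempty ⟨i₀, by simpa using hi₀⟩ fun i hi => hbelow i (by simpa using hi)
    have hp := sum_filter_add_sum_filter_not univ P p
    have hq := sum_filter_add_sum_filter_not univ P q
    rw [hsum, ← hq] at hp
    exact lt_of_add_lt_add_right (hp.symm.trans_lt ((add_lt_add_iff_left _).2 hlow))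
  · push Not at hbelow
    obtain ⟨i₀, hi₀, hqp⟩ := hbelow
    obtain ⟨j₀, hj₀⟩ := hhi
    refine sum_lt_sum_of_nonempty ⟨j₀, by simpa using hj₀⟩ fun j hj => hcross i₀ j ?_ hqp
    by_contra! hji
    exact hi₀ (hP hji (by simpa using hj))

theorem sum_filter_lt_sum_filter_of_strictMono_ratio {ι : Type*} [Fintype ι] [LinearOrder ι]
    {p q r : ι → ℝ} (hq : ∀ i, 0 < q i) (hr : StrictMono r) (hp : ∀ i, p i = q i * r i)
    (hsum : ∑ i, p i = ∑ i, q i)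
    {P : ι → Prop} [DecidablePred P] (hP : Monotone P) (hlo : ∃ i, ¬P i) (hhi : ∃ i, P i) :
    ∑ i with P i, q i < ∑ i with P i, p i := by
  refine sum_filter_lt_sum_filter_of_single_crossing hsum (fun i j hij hi => ?_) hP hlo hhi
  have hri : 1 ≤ r i := (le_mul_iff_one_le_right (hq i)).1 (hp i ▸ hi)
  rw [hp]
  exact (lt_mul_iff_one_lt_right (hq j)).2 (hri.trans_lt (hr hij))

theorem sum_mul_div_eq_one_of_fixedPoint {ι : Type*} [Fintype ι] {x q : ι → ℝ} {lam xs : ℝ}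
    (hqsum : ∑ k, q k = 1) (hd : ∀ k, lam + xs - x k ≠ 0) (hne : lam + xs ≠ 0)
    (heq : xs = lam * ∑ k, q k * x k / (lam + xs - x k)) :
    ∑ k, lam * q k / (lam + xs - x k) = 1 := by
  set S := ∑ k, q k / (lam + xs - x k)
  have hterm : ∑ k, q k * x k / (lam + xs - x k) = (lam + xs) * S - 1 := by
    rw [mul_sum, ← hqsum, ← sum_sub_distrib]
    refine sum_congr rfl fun k _ => ?_
    field_simp [hd k]
    ring
  have hS : (lam + xs) * (lam * S - 1) = 0 := by
    rw [hterm] at heq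
    linear_combination -heq
  have hpS : ∑ k, lam * q k / (lam + xs - x k) = lam * S := by
    simp only [S, mul_sum, mul_div_assoc]
  rw [hpS, ← sub_eq_zero]
  exact (mul_eq_zero.1 hS).resolve_left hne

/-- The steady-state distribution strictly first-order stochastically dominates
the redraw distribution. -/
theorem stmt_18 (n : ℕ) (hn : 2 ≤ n) (x q : Fin n → ℝ)
    (hx : StrictMono x) (hx0 : 0 ≤ x ⟨0, by omega⟩)
    (hq : ∀ k, q k ∈ Set.Ioo (0 : ℝ) 1) (hqsum : ∑ k, q k = 1)
    (lam : ℝ) (hlam : 0 < lam) (xs : ℝ)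
    (hgt : xs > x ⟨n - 1, by omega⟩ - lam)
    (heq : xs = lam * ∑ k, q k * x k / (lam + xs - x k))
    (p : Fin n → ℝ) (hp : ∀ k, p k = lam * q k / (lam + xs - x k)) :
    ∀ m : ℕ, 1 ≤ m → m ≤ n - 1 →
      ∑ k ∈ Finset.univ.filter (fun k : Fin n => m ≤ (k : ℕ)), p k >
      ∑ k ∈ Finset.univ.filter (fun k : Fin n => m ≤ (k : ℕ)), q k := by
  intro m hm1 hm2
  have hd : ∀ k, 0 < lam + xs - x k := fun k => by
    have : x k ≤ x ⟨n - 1, by omega⟩ := hx.monotone (Fin.mk_le_mk.2 (by omega))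
    linarith
  have hpsum : ∑ k, p k = ∑ k, q k := by
    rw [hqsum, ← sum_mul_div_eq_one_of_fixedPoint hqsum (fun k => (hd k).ne')
      (by linarith [hd ⟨0, by omega⟩]) heq]
    exact sum_congr rfl fun k _ => hp k
  have hratio : StrictMono fun k => lam / (lam + xs - x k) := fun i j hij =>
    div_lt_div_of_pos_left hlam (hd j) (by linarith [hx hij])
  exact sum_filter_lt_sum_filter_of_strictMono_ratio (fun k => (hq k).1) hratio
    (fun k => by rw [hp, mul_div_assoc, mul_div_left_comm]) hpsum
    (fun i j hij hi => le_trans hi hij)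
    ⟨⟨0, by omega⟩, by dsimp only; omega⟩ ⟨⟨n - 1, by omega⟩, by dsimp only; omega⟩
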